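/- For any (c,θ) in the convex set K with radii R, R₁,…,R_I, the auxiliary potential φ satisfies ‖∇φ‖_{p,Q_T} ≤ B^# + A^#(σ^#α^#R + Σ_{j=1}^I D_j^# R_j), where A^# = σ_#^{−1}(M₁|Ω|^{1/2−1/p} + M₂√(1+σ_#)) and B^# = σ_#^{−1}T^{1/p}(M₁K‖g‖_{2,Γ} + M₃√(2+2^{−1/n}σ_#)‖g‖_{p,Γ}). -/

import Mathlib

open MeasureTheory Real Set
open scoped RealInnerProductSpace ENNReal

noncomputable section

/-- Points of `ℝⁿ` with the Euclidean structure. -/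
abbrev Pt (n : ℕ) := EuclideanSpace ℝ (Fin n)

/-- Lebesgue volume restricted to `Ω`. -/
def vol {n : ℕ} (Ω : Set (Pt n)) : Measure (Pt n) := volume.restrict Ω

/-- Surface ((n-1)-dimensional Hausdorff) measure on a subset of the boundary. -/
def sm {n : ℕ} (S : Set (Pt n)) : Measure (Pt n) := (μH[(n : ℝ) - 1]).restrict S

/-- Lebesgue measure on the time interval `(0,T]`. -/
def timeM (T : ℝ) : Measure ℝ := volume.restrict (Set.Ioc 0 T)

/-- Lebesgue measure of `Ω` as a real number, `|Ω|`. -/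
def mVol {n : ℕ} (Ω : Set (Pt n)) : ℝ := (volume Ω).toReal

/-- A bounded open set with `C¹` boundary. -/
def IsC1Domain {n : ℕ} (Ω : Set (Pt n)) : Prop :=
  IsOpen Ω ∧ Bornology.IsBounded Ω ∧
    ∃ f : Pt n → ℝ, ContDiff ℝ 1 f ∧ Ω = {x | f x < 0} ∧
      ∀ x ∈ frontier Ω, fderiv ℝ f x ≠ 0

/-- `Γ` is a relatively open subset of the boundary of `Ω`. -/
def OpenInBdry {n : ℕ} (Ω Γ : Set (Pt n)) : Prop :=
  ∃ U : Set (Pt n), IsOpen U ∧ Γ = U ∩ frontier Ω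

/-- The electrolysis cell: a bounded `C¹` domain whose boundary is decomposed into
the anode, cathode, wall and outer parts. -/
structure Cell (n : ℕ) where
  Ω : Set (Pt n)
  Γa : Set (Pt n)
  Γc : Set (Pt n)
  Γw : Set (Pt n)
  Γo : Set (Pt n)
  c1 : IsC1Domain Ω
  opa : OpenInBdry Ω Γa
  opc : OpenInBdry Ω Γc
  opw : OpenInBdry Ω Γw
  opo : OpenInBdry Ω Γo
  disj : List.Pairwise Disjoint [Γa, Γc, Γw, Γo]
  cover : frontier Ω = closure Γa ∪ closure Γc ∪ closure Γw ∪ closure Γo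

/-- electrode/electrolyte interface `Γ = Γa ∪ Γc`. -/
def Cell.Γ {n : ℕ} (C : Cell n) : Set (Pt n) := C.Γa ∪ C.Γc

/-- real `L^p` norm of a scalar function. -/
def nrm {α : Type*} [MeasurableSpace α] (μ : Measure α) (p : ℝ) (f : α → ℝ) : ℝ :=
  (∫ x, |f x| ^ p ∂μ) ^ (1 / p)

/-- real `L^p` norm of a vector field. -/
def nrmV {α : Type*} [MeasurableSpace α] {n : ℕ} (μ : Measure α) (p : ℝ) (f : α → Pt n) : ℝ :=
  (∫ x, ‖f x‖ ^ p ∂μ) ^ (1 / p)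

/-- `L^p` norm over the cylinder `Ω × (0,T)`. -/
def nrmQ {n : ℕ} (Ω : Set (Pt n)) (T p : ℝ) (u : ℝ → Pt n → ℝ) : ℝ :=
  (∫ t in Set.Ioc 0 T, ∫ x, |u t x| ^ p ∂vol Ω) ^ (1 / p)

/-- `L^p` norm of a (spatial) vector field over the cylinder `Ω × (0,T)`. -/
def nrmQV {n : ℕ} (Ω : Set (Pt n)) (T p : ℝ) (u : ℝ → Pt n → Pt n) : ℝ :=
  (∫ t in Set.Ioc 0 T, ∫ x, ‖u t x‖ ^ p ∂vol Ω) ^ (1 / p)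

/-- `L^p` norm over the lateral boundary `S × (0,T)`. -/
def nrmS {n : ℕ} (S : Set (Pt n)) (T p : ℝ) (u : ℝ → Pt n → ℝ) : ℝ :=
  (∫ t in Set.Ioc 0 T, ∫ x, |u t x| ^ p ∂sm S) ^ (1 / p)

/-- `g` is the spatial weak gradient of `u` on `Ω`. -/
def IsWeakGrad {n : ℕ} (Ω : Set (Pt n)) (u : Pt n → ℝ) (g : Pt n → Pt n) : Prop :=
  ∀ φ : Pt n → ℝ, ContDiff ℝ (⊤ : ℕ∞) φ → HasCompactSupport φ → tsupport φ ⊆ Ω →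
    ∀ j : Fin n,
      (∫ x, u x * fderiv ℝ φ x (EuclideanSpace.single j 1) ∂vol Ω)
        = - ∫ x, g x j * φ x ∂vol Ω

/-- `g` is the spatial weak gradient of the time dependent function `u` on `Ω × (0,T)`. -/
def IsWeakGradQ {n : ℕ} (Ω : Set (Pt n)) (T : ℝ) (u : ℝ → Pt n → ℝ)
    (g : ℝ → Pt n → Pt n) : Prop :=
  ∀ φ : Pt n → ℝ, ContDiff ℝ (⊤ : ℕ∞) φ → HasCompactSupport φ → tsupport φ ⊆ Ω →
    ∀ ψ : ℝ → ℝ, Continuous ψ → ∀ j : Fin n,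
      (∫ t in Set.Ioc 0 T, ψ t * ∫ x, u t x * fderiv ℝ φ x (EuclideanSpace.single j 1) ∂vol Ω)
        = - ∫ t in Set.Ioc 0 T, ψ t * ∫ x, g t x j * φ x ∂vol Ω

/-- `u'` represents the distributional time derivative of `u` on `Ω × (0,T)`. -/
def IsWeakTimeDeriv {n : ℕ} (Ω : Set (Pt n)) (T : ℝ) (u u' : ℝ → Pt n → ℝ) : Prop :=
  ∀ ψ : ℝ → ℝ, ContDiff ℝ (⊤ : ℕ∞) ψ → HasCompactSupport ψ → tsupport ψ ⊆ Set.Ioo 0 T →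
    ∀ g : Pt n → ℝ, Continuous g →
      (∫ t in Set.Ioc 0 T, deriv ψ t * ∫ x, u t x * g x ∂vol Ω)
        = - ∫ t in Set.Ioc 0 T, ψ t * ∫ x, u' t x * g x ∂vol Ω

/-- A (stationary) Sobolev function: the function, its weak gradient and its boundary trace. -/
structure SFn (n : ℕ) where
  u : Pt n → ℝ
  gr : Pt n → Pt n
  tr : Pt n → ℝ

/-- Membership `w ∈ W^{1,p}(Ω)` (with trace datum in `L^p(∂Ω)`). -/
def MemW1 {n : ℕ} (Ω : Set (Pt n)) (p : ℝ) (w : SFn n) : Prop :=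
  MemLp w.u (ENNReal.ofReal p) (vol Ω) ∧
  MemLp w.gr (ENNReal.ofReal p) (vol Ω) ∧
  MemLp w.tr (ENNReal.ofReal p) (sm (frontier Ω)) ∧
  IsWeakGrad Ω w.u w.gr

/-- Membership in `V_p(Ω) = {v ∈ W^{1,p}(Ω) : ∫_{∂Ω} v ds = 0}`. -/
def MemVp {n : ℕ} (Ω : Set (Pt n)) (p : ℝ) (w : SFn n) : Prop :=
  MemW1 Ω p w ∧ (∫ x, w.tr x ∂sm (frontier Ω)) = 0

/-- A parabolic (time dependent) Sobolev function: the function, its spatial weak gradient,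
its lateral boundary trace, and a representative of its time derivative. -/
structure PFn (n : ℕ) where
  u : ℝ → Pt n → ℝ
  gr : ℝ → Pt n → Pt n
  tr : ℝ → Pt n → ℝ
  dt : ℝ → Pt n → ℝ

/-- The spatial slice of a parabolic function at time `t`. -/
def PFn.at {n : ℕ} (w : PFn n) (t : ℝ) : SFn n := ⟨w.u t, w.gr t, w.tr t⟩

/-- difference of two parabolic functions. -/
def PFn.sub {n : ℕ} (w v : PFn n) : PFn n :=
  ⟨fun t x => w.u t x - v.u t x, fun t x => w.gr t x - v.gr t x,
   fun t x => w.tr t x - v.tr t x, fun t x => w.dt t x - v.dt t x⟩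

/-- Membership `w ∈ L^p(0,T;W^{1,p}(Ω))`. -/
def MemLW {n : ℕ} (Ω : Set (Pt n)) (T p : ℝ) (w : PFn n) : Prop :=
  MemLp (fun z : ℝ × Pt n => w.u z.1 z.2) (ENNReal.ofReal p) ((timeM T).prod (vol Ω)) ∧
  MemLp (fun z : ℝ × Pt n => w.gr z.1 z.2) (ENNReal.ofReal p) ((timeM T).prod (vol Ω)) ∧
  MemLp (fun z : ℝ × Pt n => w.tr z.1 z.2) (ENNReal.ofReal p)
    ((timeM T).prod (sm (frontier Ω))) ∧
  IsWeakGradQ Ω T w.u w.gr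

/-- Membership in `V_{p,ℓ}(Q_T)`: in `L^p(0,T;W^{1,p}(Ω))` with trace in `L^ℓ(Σ_T)`. -/
def MemVQ {n : ℕ} (Ω Γw : Set (Pt n)) (T p ℓ : ℝ) (w : PFn n) : Prop :=
  MemLW Ω T p w ∧
  MemLp (fun z : ℝ × Pt n => w.tr z.1 z.2) (ENNReal.ofReal ℓ) ((timeM T).prod (sm Γw))

/-- `u ∈ L^∞(0,T;L^p(Ω))`. -/
def MemLinfLp {n : ℕ} (Ω : Set (Pt n)) (T p : ℝ) (u : ℝ → Pt n → ℝ) : Prop :=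
  essSup (fun t => eLpNorm (u t) (ENNReal.ofReal p) (vol Ω)) (timeM T) < ⊤

/-- The time derivative of `u` belongs to the dual `[V_{p',ℓ}(Q_T)]'`:
the pairing is bounded by the `V_{p',ℓ}`-norm. -/
def DtInDualV {n : ℕ} (Ω Γw : Set (Pt n)) (T q ℓ : ℝ) (u : PFn n) : Prop :=
  ∃ C : ℝ, ∀ v : PFn n, MemVQ Ω Γw T q ℓ v →
    |∫ t in Set.Ioc 0 T, ∫ x, u.dt t x * v.u t x ∂vol Ω| ≤
      C * (nrmQ Ω T q v.u + nrmQV Ω T q v.gr + nrmS Γw T ℓ v.tr)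

/-- The time derivative of `u` belongs to `L^p(0,T;(W^{1,p'}(Ω))')` (boundedness form). -/
def DtInDualW {n : ℕ} (Ω : Set (Pt n)) (T q : ℝ) (u : PFn n) : Prop :=
  ∃ C : ℝ, ∀ v : PFn n, MemLW Ω T q v →
    |∫ t in Set.Ioc 0 T, ∫ x, u.dt t x * v.u t x ∂vol Ω| ≤
      C * (nrmQ Ω T q v.u + nrmQV Ω T q v.gr)

/-- `u ∈ C([0,T];L²(Ω))`. -/
def ContL2 {n : ℕ} (Ω : Set (Pt n)) (T : ℝ) (u : ℝ → Pt n → ℝ) : Prop :=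
  ∃ U : ℝ → (Lp ℝ 2 (vol Ω)), ContinuousOn U (Set.Icc 0 T) ∧
    ∀ t ∈ Set.Icc 0 T, (U t : Pt n → ℝ) =ᵐ[vol Ω] u t

/-- Carathéodory function of `(x,e)`. -/
def Cara {n : ℕ} (f : Pt n → ℝ → ℝ) : Prop :=
  (∀ e : ℝ, Measurable fun x => f x e) ∧ ∀ x : Pt n, Continuous fun e => f x e

/-- Carathéodory function of `(x,d,e)`. -/
def Cara2 {n : ℕ} (f : Pt n → ℝ → ℝ → ℝ) : Prop :=
  (∀ d e : ℝ, Measurable fun x => f x d e) ∧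
    ∀ x : Pt n, Continuous fun q : ℝ × ℝ => f x q.1 q.2

/-- Carathéodory function of `(x,t,e,d)`. -/
def Cara3 {n : ℕ} (f : Pt n → ℝ → ℝ → ℝ → ℝ) : Prop :=
  (∀ t e d : ℝ, Measurable fun x => f x t e d) ∧
    ∀ x : Pt n, Continuous fun q : ℝ × ℝ × ℝ => f x q.1 q.2.1 q.2.2

/-- Carathéodory tensor (matrix-valued, realized as continuous linear maps). -/
def CaraM {n : ℕ} (K : Pt n → ℝ → (Pt n →L[ℝ] Pt n)) : Prop :=
  (∀ (e : ℝ) (a : Pt n), Measurable fun x => K x e a) ∧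
    ∀ (x : Pt n) (a : Pt n), Continuous fun e => K x e a

/-- Uniform ellipticity `K(x,e)ξ·ξ ≥ k|ξ|²`. -/
def EllipticM {n : ℕ} (K : Pt n → ℝ → (Pt n →L[ℝ] Pt n)) (k : ℝ) : Prop :=
  ∀ (x : Pt n) (e : ℝ) (ξ : Pt n), k * ‖ξ‖ ^ 2 ≤ ⟪K x e ξ, ξ⟫

/-- Entrywise bound `|K_{jl}(x,e)| ≤ k`. -/
def BoundedM {n : ℕ} (K : Pt n → ℝ → (Pt n →L[ℝ] Pt n)) (k : ℝ) : Prop :=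
  ∀ (x : Pt n) (e : ℝ) (j l : Fin n),
    |⟪K x e (EuclideanSpace.single l 1), EuclideanSpace.single j 1⟫| ≤ k

/-- `c` is a continuity constant of the trace embedding `W^{1,q}(Ω) ↪ L^r(∂Ω)`
(tested on smooth functions). -/
def IsTraceConst {n : ℕ} (Ω : Set (Pt n)) (q r c : ℝ) : Prop :=
  ∀ w : Pt n → ℝ, ContDiff ℝ 1 w →
    nrm (sm (frontier Ω)) r w ≤
      c * (nrm (vol Ω) q w + nrmV (vol Ω) q (fun x => gradient w x))

/-- `c` is a Poincaré constant for mean-zero (on the boundary) functions in `W^{1,p}(Ω)`. -/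
def IsPoincare {n : ℕ} (Ω : Set (Pt n)) (p c : ℝ) : Prop :=
  ∀ w : Pt n → ℝ, ContDiff ℝ 1 w → (∫ x, w x ∂sm (frontier Ω)) = 0 →
    nrm (vol Ω) p w ≤ c * nrmV (vol Ω) p (fun x => gradient w x)

/-- The auxiliary function `Z(a,d,e) = a√(1+T·eᵀ) + e√(1+d)`. -/
def Zfun (T a d e : ℝ) : ℝ := a * Real.sqrt (1 + T * Real.exp T) + e * Real.sqrt (1 + d)

end
noncomputable section

/-- Weak solution of the linear parabolic problem of Theorem 3.1:
`∫⟨∂ₜu,v⟩ + ∫ K∇u·∇v + ∫_{Σ_T} h_R(u)|u|^{ℓ-2}u v = ∫ f⃗·∇v + ∫∫_Γ f v + ∫_{Σ_T} H v`. -/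
def Sol31 {n : ℕ} (Ω Γ Γw : Set (Pt n)) (T ℓ q : ℝ)
    (K : Pt n → ℝ → (Pt n →L[ℝ] Pt n)) (hR : Pt n → ℝ → ℝ)
    (fv : ℝ → Pt n → Pt n) (f H : ℝ → Pt n → ℝ) (u : PFn n) : Prop :=
  ∀ v : PFn n, MemVQ Ω Γw T q ℓ v →
    ((∫ t in Set.Ioc 0 T, ∫ x, u.dt t x * v.u t x ∂vol Ω)
      + (∫ t in Set.Ioc 0 T, ∫ x, ⟪K x (u.u t x) (u.gr t x), v.gr t x⟫ ∂vol Ω)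
      + ∫ t in Set.Ioc 0 T, ∫ x,
          hR x (u.tr t x) * |u.tr t x| ^ (ℓ - 2) * u.tr t x * v.tr t x ∂sm Γw)
    = ((∫ t in Set.Ioc 0 T, ∫ x, ⟪fv t x, v.gr t x⟫ ∂vol Ω)
      + (∫ t in Set.Ioc 0 T, ∫ x, f t x * v.tr t x ∂sm Γ)
      + ∫ t in Set.Ioc 0 T, ∫ x, H t x * v.tr t x ∂sm Γw)

/-- Weak solution of the auxiliary Neumann problem for the electric potential
(Proposition 4.1), with frozen temperature `θ` and concentrations `c`. -/
def EllSol {n : ℕ} (I : ℕ) (Ω Γ : Set (Pt n)) (q F : ℝ) (z : Fin I → ℝ)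
    (σ α : Pt n → ℝ → ℝ) (D : Fin I → Pt n → ℝ → ℝ)
    (θ : SFn n) (c : Fin I → SFn n) (g : Pt n → ℝ) (φ : SFn n) : Prop :=
  ∀ v : SFn n, MemVp Ω q v →
    (∫ x, σ x (θ.u x) * ⟪φ.gr x, v.gr x⟫ ∂vol Ω)
    = (∫ x, g x * v.tr x ∂sm Γ)
      - ∫ x, ⟪(α x (θ.u x) * σ x (θ.u x)) • θ.gr x
             + F • ∑ i, (z i * D i x (θ.u x)) • (c i).gr x, v.gr x⟫ ∂vol Ω

/-- Weak solution of the auxiliary concentration problem (Proposition 4.2) for species `i`,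
with frozen temperature `θ`, concentration `ci` and potential `φ`. -/
def ConcSol {n : ℕ} (Ω Γ : Set (Pt n)) (T q F zi : ℝ)
    (Di : Pt n → ℝ → ℝ) (Si : Pt n → ℝ → ℝ → ℝ) (ti : Pt n → ℝ)
    (σ : Pt n → ℝ → ℝ) (gi : Pt n → ℝ → ℝ → ℝ → ℝ)
    (θ φ ci : PFn n) (Ψ : PFn n) : Prop :=
  ∀ v : PFn n, MemLW Ω T q v →
    ((∫ t in Set.Ioc 0 T, ∫ x, Ψ.dt t x * v.u t x ∂vol Ω)
      + ∫ t in Set.Ioc 0 T, ∫ x, Di x (θ.u t x) * ⟪Ψ.gr t x, v.gr t x⟫ ∂vol Ω)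
    = ((∫ t in Set.Ioc 0 T, ∫ x, gi x t (θ.tr t x) (φ.tr t x) * v.tr t x ∂sm Γ)
      - ∫ t in Set.Ioc 0 T, ∫ x,
          ⟪(ci.u t x * Si x (ci.u t x) (θ.u t x)) • θ.gr t x
            + ((ti x / (F * zi)) * σ x (θ.u t x)) • φ.gr t x, v.gr t x⟫ ∂vol Ω)

/-- Weak solution of the auxiliary heat problem (Proposition 4.3), with frozen
temperature `θ`, concentrations `c` and potential `φ`. -/
def TempSol {n : ℕ} (I : ℕ) (Ω Γ Γw : Set (Pt n)) (T ℓ q ρcp Rg : ℝ)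
    (K : Pt n → ℝ → (Pt n →L[ℝ] Pt n)) (hR : Pt n → ℝ → ℝ)
    (hC : Pt n → ℝ → ℝ → ℝ) (γ : Pt n → ℝ → ℝ → ℝ) (θe : ℝ → Pt n → ℝ)
    (Pi : Pt n → ℝ → (Pt n →L[ℝ] Pt n)) (σ : Pt n → ℝ → ℝ)
    (D' : Fin I → Pt n → ℝ → ℝ → ℝ) (θ φ : PFn n) (c : Fin I → PFn n)
    (Θ : PFn n) : Prop :=
  ∀ v : PFn n, MemVQ Ω Γw T q ℓ v →
    (ρcp * (∫ t in Set.Ioc 0 T, ∫ x, Θ.dt t x * v.u t x ∂vol Ω)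
      + (∫ t in Set.Ioc 0 T, ∫ x, ⟪K x (θ.u t x) (Θ.gr t x), v.gr t x⟫ ∂vol Ω)
      + (∫ t in Set.Ioc 0 T, ∫ x,
          hR x (θ.tr t x) * |Θ.tr t x| ^ (ℓ - 2) * Θ.tr t x * v.tr t x ∂sm Γw)
      + ∫ t in Set.Ioc 0 T, ∫ x, hC x t (θ.tr t x) * Θ.tr t x * v.tr t x ∂sm Γ)
    = ((∫ t in Set.Ioc 0 T, ∫ x, hC x t (θ.tr t x) * θe t x * v.tr t x ∂sm Γ)
      + (∫ t in Set.Ioc 0 T, ∫ x, γ x t (θ.tr t x) * v.tr t x ∂sm Γw)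
      - ∫ t in Set.Ioc 0 T, ∫ x,
          ⟪(Rg * (θ.u t x) ^ 2) •
              (∑ j, D' j x ((c j).u t x) (θ.u t x) • (c j).gr t x)
            + σ x (θ.u t x) • (Pi x (θ.u t x) (φ.gr t x)), v.gr t x⟫ ∂vol Ω)

end
noncomputable section

/-- `L^∞(0,T;L^p(Ω))` norm. -/
def nrmInf {n : ℕ} (Ω : Set (Pt n)) (T p : ℝ) (u : ℝ → Pt n → ℝ) : ℝ :=
  (essSup (fun t => ENNReal.ofReal (nrm (vol Ω) p (u t))) (timeM T)).toReal

/-- distance in `L^p(0,T;W^{1,p}(Ω))`. -/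
def distW {n : ℕ} (Ω : Set (Pt n)) (T p : ℝ) (u v : PFn n) : ℝ :=
  nrmQ Ω T p (fun t x => u.u t x - v.u t x)
    + nrmQV Ω T p (fun t x => u.gr t x - v.gr t x)

/-- distance in `V_{p,ℓ}(Q_T)`. -/
def distV {n : ℕ} (Ω Γw : Set (Pt n)) (T p ℓ : ℝ) (u v : PFn n) : ℝ :=
  distW Ω T p u v + nrmS Γw T ℓ (fun t x => u.tr t x - v.tr t x)

end
noncomputable section

/-- Membership in the convex set `𝒦` of frozen concentration–temperature pairs. -/
def inK {n : ℕ} (I : ℕ) (Ω Γw : Set (Pt n)) (T p ℓ R : ℝ) (Ri : Fin I → ℝ)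
    (w : (Fin I → PFn n) × PFn n) : Prop :=
  (∀ i, MemLW Ω T p (w.1 i) ∧
    nrmQV Ω T p (w.1 i).gr + nrmQ Ω T p (w.1 i).u ≤ Ri i) ∧
  MemVQ Ω Γw T p ℓ w.2 ∧
  nrmQV Ω T p w.2.gr + nrmS Γw T ℓ w.2.tr ≤ R

/-- Distance in `[L^p(0,T;W^{1,p}(Ω))]^I × V_{p,ℓ}(Q_T)` (strong topology). -/
def distK {n : ℕ} (I : ℕ) (Ω Γw : Set (Pt n)) (T p ℓ : ℝ)
    (w w' : (Fin I → PFn n) × PFn n) : ℝ :=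
  (∑ i, distW Ω T p (w.1 i) (w'.1 i)) + distV Ω Γw T p ℓ w.2 w'.2

end
noncomputable section

/-- The constant `A^#` of Section 5. -/
def AsharpD (σm M1 M2 mΩ p : ℝ) : ℝ :=
  σm⁻¹ * (M1 * mΩ ^ ((1 : ℝ) / 2 - 1 / p) + M2 * Real.sqrt (1 + σm))

/-- The constant `B^#` of Section 5 (`g2`, `gp` are `‖g‖_{2,Γ}` and `‖g‖_{p,Γ}`). -/
def BsharpD (n : ℕ) (σm T p M1 K0 M3 g2 gp : ℝ) : ℝ :=
  σm⁻¹ * T ^ (1 / p) *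
    (M1 * K0 * g2 + M3 * Real.sqrt (2 + 2 ^ (-(1 : ℝ) / (n : ℝ)) * σm) * gp)

end
noncomputable section

namespace PBK

variable {α : Type*} [MeasurableSpace α] {μ : Measure α}

lemma ofReal_rpow_integral {E : Type*} [NormedAddCommGroup E] {f : α → E} {q : ℝ} (hq : 0 < q)
    (hf : MemLp f (ENNReal.ofReal q) μ) :
    ENNReal.ofReal ((∫ x, ‖f x‖ ^ q ∂μ) ^ (1/q)) = eLpNorm f (ENNReal.ofReal q) μ := by
  have hq0 : ENNReal.ofReal q ≠ 0 := by simp [ENNReal.ofReal_eq_zero]; linarith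
  have htr : (ENNReal.ofReal q).toReal = q := ENNReal.toReal_ofReal hq.le
  rw [eLpNorm_eq_lintegral_rpow_enorm_toReal hq0 ENNReal.ofReal_ne_top, htr]
  simp only [enorm_eq_nnnorm]
  have hmeas : AEStronglyMeasurable f μ := hf.1
  have key : ∫ x, ‖f x‖ ^ q ∂μ = (∫⁻ x, (‖f x‖₊ : ℝ≥0∞) ^ q ∂μ).toReal := by
    rw [integral_eq_lintegral_of_nonneg_ae
      (Filter.Eventually.of_forall fun x => Real.rpow_nonneg (norm_nonneg _) q)
      ((hmeas.norm.aemeasurable.pow aemeasurable_const).aestronglyMeasurable)]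
    congr 1
    refine lintegral_congr fun x => ?_
    rw [← ENNReal.ofReal_rpow_of_nonneg (norm_nonneg _) hq.le, ofReal_norm, enorm_eq_nnnorm]
  have hfin : (∫⁻ x, (‖f x‖₊ : ℝ≥0∞) ^ q ∂μ) ≠ ⊤ := by
    have h2 := hf.2
    rw [eLpNorm_eq_lintegral_rpow_enorm_toReal hq0 ENNReal.ofReal_ne_top, htr] at h2
    simp only [enorm_eq_nnnorm] at h2
    intro h
    rw [h, ENNReal.top_rpow_of_pos (by positivity : (0:ℝ) < 1/q)] at h2
    exact (lt_irrefl _ h2).elim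
  rw [key, ENNReal.toReal_rpow,
    ENNReal.ofReal_toReal (ENNReal.rpow_ne_top_of_nonneg (by positivity) hfin)]

lemma eLpNorm_lintegral_eq {E : Type*} [NormedAddCommGroup E] {f : α → E} {q : ℝ} (hq : 0 < q) :
    eLpNorm f (ENNReal.ofReal q) μ = (∫⁻ x, (‖f x‖₊ : ℝ≥0∞) ^ q ∂μ) ^ (1/q) := by
  have hq0 : ENNReal.ofReal q ≠ 0 := by simp [ENNReal.ofReal_eq_zero]; linarith
  rw [eLpNorm_eq_lintegral_rpow_enorm_toReal hq0 ENNReal.ofReal_ne_top,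
    ENNReal.toReal_ofReal hq.le]
  simp only [enorm_eq_nnnorm]

/-- Minkowski for finite sums in `ℝ≥0∞`. -/
lemma lintegral_Lp_sum_le {ι : Type*} (s : Finset ι) (f : ι → α → ℝ≥0∞)
    (hf : ∀ i ∈ s, AEMeasurable (f i) μ) {q : ℝ} (hq : 1 ≤ q) :
    (∫⁻ a, (∑ i ∈ s, f i a) ^ q ∂μ) ^ (1/q) ≤
      ∑ i ∈ s, (∫⁻ a, (f i a) ^ q ∂μ) ^ (1/q) := by
  classical
  induction s using Finset.induction with
  | empty =>
      have hq' : (0:ℝ) < q := lt_of_lt_of_le zero_lt_one hq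
      simp [ENNReal.zero_rpow_of_pos hq',
        ENNReal.zero_rpow_of_pos (by positivity : (0:ℝ) < 1/q), hq']
  | insert i s' hnot ih =>
      have hfi : AEMeasurable (f i) μ := hf i (Finset.mem_insert_self i s')
      have hsum : AEMeasurable (fun a => ∑ j ∈ s', f j a) μ := by
        apply Finset.aemeasurable_fun_sum
        intro j hj; exact hf j (Finset.mem_insert_of_mem hj)
      simp only [Finset.sum_insert hnot]
      calc (∫⁻ a, (f i a + ∑ j ∈ s', f j a) ^ q ∂μ) ^ (1/q)
          ≤ (∫⁻ a, (f i a) ^ q ∂μ) ^ (1/q) +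
            (∫⁻ a, (∑ j ∈ s', f j a) ^ q ∂μ) ^ (1/q) :=
            ENNReal.lintegral_Lp_add_le hfi hsum hq
        _ ≤ _ := by
            gcongr
            exact ih fun j hj => hf j (Finset.mem_insert_of_mem hj)


/-- integral of `‖f‖^q` equals toReal of the lintegral, with finiteness. -/
lemma integral_rpow_eq_toReal {E : Type*} [NormedAddCommGroup E] {f : α → E} {q : ℝ}
    (hq : 0 < q) (hf : MemLp f (ENNReal.ofReal q) μ) :
    ∫ x, ‖f x‖ ^ q ∂μ = (∫⁻ x, (‖f x‖₊ : ℝ≥0∞) ^ q ∂μ).toReal ∧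
      (∫⁻ x, (‖f x‖₊ : ℝ≥0∞) ^ q ∂μ) ≠ ⊤ := by
  have hq0 : ENNReal.ofReal q ≠ 0 := by simp [ENNReal.ofReal_eq_zero]; linarith
  have hmeas : AEStronglyMeasurable f μ := hf.1
  constructor
  · rw [integral_eq_lintegral_of_nonneg_ae
      (Filter.Eventually.of_forall fun x => Real.rpow_nonneg (norm_nonneg _) q)
      ((hmeas.norm.aemeasurable.pow aemeasurable_const).aestronglyMeasurable)]
    congr 1
    refine lintegral_congr fun x => ?_
    rw [← ENNReal.ofReal_rpow_of_nonneg (norm_nonneg _) hq.le, ofReal_norm, enorm_eq_nnnorm]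
  · have h2 := hf.2
    rw [eLpNorm_lintegral_eq hq] at h2
    intro h
    rw [h, ENNReal.top_rpow_of_pos (by positivity : (0:ℝ) < 1/q)] at h2
    exact (lt_irrefl _ h2).elim


/-- Hölder: `L²` norm bounded by `L^q` norm on a finite measure space. -/
lemma holder_2q {E : Type*} [NormedAddCommGroup E] [IsFiniteMeasure μ] {f : α → E} {q : ℝ}
    (hq : 2 ≤ q) (hf : MemLp f (ENNReal.ofReal q) μ) :
    (∫ x, ‖f x‖ ^ (2:ℝ) ∂μ) ^ (1/(2:ℝ)) ≤
      (μ Set.univ).toReal ^ ((1:ℝ)/2 - 1/q) * (∫ x, ‖f x‖ ^ q ∂μ) ^ (1/q) := by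
  have hq0 : (0:ℝ) < q := by linarith
  have hexp : (0:ℝ) ≤ 1/2 - 1/q := by
    have : 1/q ≤ 1/2 := one_div_le_one_div_of_le (by norm_num) hq
    linarith
  have hle : ENNReal.ofReal 2 ≤ ENNReal.ofReal q := ENNReal.ofReal_le_ofReal hq
  have hf2 : MemLp f (ENNReal.ofReal 2) μ := hf.mono_exponent hle
  have key := eLpNorm_le_eLpNorm_mul_rpow_measure_univ hle hf.1
  rw [← ofReal_rpow_integral (by norm_num : (0:ℝ) < 2) hf2,
    ← ofReal_rpow_integral hq0 hf, ENNReal.toReal_ofReal (by norm_num : (0:ℝ) ≤ 2),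
    ENNReal.toReal_ofReal hq0.le] at key
  have hμ : μ Set.univ = ENNReal.ofReal ((μ Set.univ).toReal) :=
    (ENNReal.ofReal_toReal (measure_ne_top μ _)).symm
  rw [hμ, ENNReal.ofReal_rpow_of_nonneg ENNReal.toReal_nonneg hexp,
    ← ENNReal.ofReal_mul (by positivity)] at key
  rw [mul_comm]
  exact (ENNReal.ofReal_le_ofReal_iff (by positivity)).mp key

/-- Minkowski for the weighted mix of norms. -/
lemma mix_bound {E : Type*} [NormedAddCommGroup E] {q : ℝ} (hq : 1 ≤ q)
    {I : ℕ} {a : ℝ} {b : Fin I → ℝ} (ha : 0 ≤ a) (hb : ∀ j, 0 ≤ b j)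
    {u : α → E} {v : Fin I → α → E} (hu : MemLp u (ENNReal.ofReal q) μ)
    (hv : ∀ j, MemLp (v j) (ENNReal.ofReal q) μ) :
    (∫ x, |a * ‖u x‖ + ∑ j, b j * ‖v j x‖| ^ q ∂μ) ^ (1/q) ≤
      a * (∫ x, ‖u x‖ ^ q ∂μ) ^ (1/q) + ∑ j, b j * (∫ x, ‖v j x‖ ^ q ∂μ) ^ (1/q) := by
  have hq0 : (0:ℝ) < q := by linarith
  have hq1 : (1:ℝ≥0∞) ≤ ENNReal.ofReal q := by
    rw [← ENNReal.ofReal_one]; exact ENNReal.ofReal_le_ofReal hq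
  -- each weighted norm computation
  have cstm : ∀ (c : ℝ) (w : α → E), 0 ≤ c → MemLp w (ENNReal.ofReal q) μ →
      eLpNorm (fun x => c * ‖w x‖) (ENNReal.ofReal q) μ
        = ENNReal.ofReal (c * (∫ x, ‖w x‖ ^ q ∂μ) ^ (1/q)) := by
    intro c w hc hw
    rw [← ofReal_rpow_integral hq0 ((hw.norm).const_mul c)]
    congr 1
    have h1 : (∫ x, ‖c * ‖w x‖‖ ^ q ∂μ) = c ^ q * ∫ x, ‖w x‖ ^ q ∂μ := by
      rw [← integral_const_mul]
      refine integral_congr_ae (Filter.Eventually.of_forall fun x => ?_)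
      show ‖c * ‖w x‖‖ ^ q = c ^ q * ‖w x‖ ^ q
      rw [Real.norm_eq_abs, abs_of_nonneg (by positivity),
        Real.mul_rpow hc (norm_nonneg _)]
    rw [h1, Real.mul_rpow (by positivity) (by positivity),
      ← Real.rpow_mul hc, mul_one_div_cancel hq0.ne', Real.rpow_one]
  have hg0m : MemLp (fun x => a * ‖u x‖) (ENNReal.ofReal q) μ := (hu.norm).const_mul a
  have hgjm : ∀ j, MemLp (fun x => b j * ‖v j x‖) (ENNReal.ofReal q) μ :=
    fun j => ((hv j).norm).const_mul (b j)
  have hsum : MemLp (fun x => ∑ j, b j * ‖v j x‖) (ENNReal.ofReal q) μ := by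
    have h := memLp_finset_sum' (μ := μ) (p := ENNReal.ofReal q) Finset.univ
      (f := fun j (x : α) => b j * ‖v j x‖) (fun j _ => hgjm j)
    have he : (∑ j : Fin I, fun (x : α) => b j * ‖v j x‖) = fun x => ∑ j, b j * ‖v j x‖ := by
      funext x; simp
    rwa [he] at h
  have hFm : MemLp (fun x => a * ‖u x‖ + ∑ j, b j * ‖v j x‖) (ENNReal.ofReal q) μ :=
    hg0m.add hsum
  have eF : ENNReal.ofReal ((∫ x, |a * ‖u x‖ + ∑ j, b j * ‖v j x‖| ^ q ∂μ) ^ (1/q))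
      = eLpNorm (fun x => a * ‖u x‖ + ∑ j, b j * ‖v j x‖) (ENNReal.ofReal q) μ := by
    rw [← ofReal_rpow_integral hq0 hFm]
    simp only [Real.norm_eq_abs]
  have tri : eLpNorm (fun x => a * ‖u x‖ + ∑ j, b j * ‖v j x‖) (ENNReal.ofReal q) μ ≤
      eLpNorm (fun x => a * ‖u x‖) (ENNReal.ofReal q) μ
        + ∑ j, eLpNorm (fun x => b j * ‖v j x‖) (ENNReal.ofReal q) μ := by
    have h1 := eLpNorm_add_le hg0m.1 hsum.1 hq1
    have h2 : eLpNorm (fun x => ∑ j, b j * ‖v j x‖) (ENNReal.ofReal q) μ ≤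
        ∑ j, eLpNorm (fun x => b j * ‖v j x‖) (ENNReal.ofReal q) μ := by
      have h := eLpNorm_sum_le (μ := μ) (p := ENNReal.ofReal q) (s := Finset.univ)
        (f := fun j (x : α) => b j * ‖v j x‖) (fun j _ => (hgjm j).1) hq1
      have he : (∑ j : Fin I, fun (x : α) => b j * ‖v j x‖) = fun x => ∑ j, b j * ‖v j x‖ := by
        funext x; simp
      rwa [he] at h
    calc _ ≤ _ := h1
      _ ≤ _ := by gcongr
  refine (ENNReal.ofReal_le_ofReal_iff (add_nonneg (mul_nonneg ha (by positivity))
    (Finset.sum_nonneg fun j _ => mul_nonneg (hb j) (by positivity)))).mp ?_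
  rw [eF]
  calc _ ≤ _ := tri
    _ = _ := by
        rw [cstm a u ha hu, Finset.sum_congr rfl fun j _ => cstm (b j) (v j) (hb j) (hv j),
          ← ENNReal.ofReal_sum_of_nonneg (fun j _ => mul_nonneg (hb j) (by positivity)),
          ← ENNReal.ofReal_add (mul_nonneg ha (by positivity))
            (Finset.sum_nonneg fun j _ => mul_nonneg (hb j) (by positivity))]

variable {β : Type*} [MeasurableSpace β] {ν : Measure β} [SFinite ν]

/-- Slicing a product `MemLp` function. -/
lemma slice_props {E : Type*} [NormedAddCommGroup E] {f : α × β → E} {q : ℝ} (hq : 0 < q)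
    (hf : MemLp f (ENNReal.ofReal q) (μ.prod ν)) :
    (∀ᵐ t ∂μ, MemLp (fun x => f (t, x)) (ENNReal.ofReal q) ν) ∧
    AEMeasurable (fun t => ∫⁻ x, (‖f (t, x)‖₊ : ℝ≥0∞) ^ q ∂ν) μ ∧
    (∫⁻ t, ∫⁻ x, (‖f (t, x)‖₊ : ℝ≥0∞) ^ q ∂ν ∂μ) ≠ ⊤ := by
  have hg : AEMeasurable (fun z : α × β => (‖f z‖₊ : ℝ≥0∞) ^ q) (μ.prod ν) :=
    hf.1.enorm.pow aemeasurable_const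
  have hfin : (∫⁻ z, (‖f z‖₊ : ℝ≥0∞) ^ q ∂μ.prod ν) ≠ ⊤ := by
    have h2 := hf.2
    rw [eLpNorm_lintegral_eq hq] at h2
    intro h
    rw [h, ENNReal.top_rpow_of_pos (by positivity : (0:ℝ) < 1/q)] at h2
    exact (lt_irrefl _ h2).elim
  have hton : (∫⁻ t, ∫⁻ x, (‖f (t, x)‖₊ : ℝ≥0∞) ^ q ∂ν ∂μ) ≠ ⊤ := by
    rw [← lintegral_prod _ hg]; exact hfin
  have hmeasΛ : AEMeasurable (fun t => ∫⁻ x, (‖f (t, x)‖₊ : ℝ≥0∞) ^ q ∂ν) μ := by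
    refine ⟨fun t => ∫⁻ x, hg.mk _ (t, x) ∂ν, hg.measurable_mk.lintegral_prod_right', ?_⟩
    filter_upwards [Measure.ae_ae_of_ae_prod hg.ae_eq_mk] with t ht using
      lintegral_congr_ae ht
  refine ⟨?_, hmeasΛ, hton⟩
  have hslt : ∀ᵐ t ∂μ, (∫⁻ x, (‖f (t, x)‖₊ : ℝ≥0∞) ^ q ∂ν) < ⊤ :=
    ae_lt_top' hmeasΛ hton
  filter_upwards [hf.1.prodMk_left, hslt] with t hm hl
  refine ⟨hm, ?_⟩
  rw [eLpNorm_lintegral_eq hq]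
  exact ENNReal.rpow_lt_top_of_nonneg (by positivity) hl.ne

/-- The `L^q` norm of a product `MemLp` function as the iterated real integral. -/
lemma double_repr {E : Type*} [NormedAddCommGroup E] {f : α × β → E} {q : ℝ} (hq : 0 < q)
    (hf : MemLp f (ENNReal.ofReal q) (μ.prod ν)) :
    (∫⁻ t, ∫⁻ x, (‖f (t, x)‖₊ : ℝ≥0∞) ^ q ∂ν ∂μ) ^ (1/q) =
      ENNReal.ofReal ((∫ t, ∫ x, ‖f (t, x)‖ ^ q ∂ν ∂μ) ^ (1/q)) := by
  obtain ⟨hae, hmeasΛ, hton⟩ := slice_props hq hf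
  have hslt : ∀ᵐ t ∂μ, (∫⁻ x, (‖f (t, x)‖₊ : ℝ≥0∞) ^ q ∂ν) < ⊤ := ae_lt_top' hmeasΛ hton
  have h1 : (∫ t, ∫ x, ‖f (t, x)‖ ^ q ∂ν ∂μ)
      = (∫⁻ t, ∫⁻ x, (‖f (t, x)‖₊ : ℝ≥0∞) ^ q ∂ν ∂μ).toReal := by
    rw [← integral_toReal hmeasΛ hslt]
    refine integral_congr_ae ?_
    filter_upwards [hae] with t ht using (integral_rpow_eq_toReal hq ht).1
  rw [h1, ENNReal.toReal_rpow,
    ENNReal.ofReal_toReal (ENNReal.rpow_ne_top_of_nonneg (by positivity) hton)]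

end PBK

namespace PBK2

open MeasureTheory Real Set
open scoped ENNReal

lemma nrm_nonneg {α : Type*} [MeasurableSpace α] (μ : Measure α) (q : ℝ) (f : α → ℝ) :
    0 ≤ nrm μ q f :=
  Real.rpow_nonneg (integral_nonneg fun _ => Real.rpow_nonneg (abs_nonneg _) _) _

lemma nrmV_nonneg {α : Type*} [MeasurableSpace α] (μ : Measure α) {n : ℕ} (q : ℝ)
    (f : α → Pt n) : 0 ≤ nrmV μ q f :=
  Real.rpow_nonneg (integral_nonneg fun _ => Real.rpow_nonneg (norm_nonneg _) _) _

lemma nrmQ_nonneg {n : ℕ} (Ω : Set (Pt n)) (T q : ℝ) (u : ℝ → Pt n → ℝ) :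
    0 ≤ nrmQ Ω T q u :=
  Real.rpow_nonneg (integral_nonneg fun _ =>
    integral_nonneg fun _ => Real.rpow_nonneg (abs_nonneg _) _) _

lemma nrmQV_nonneg {n : ℕ} (Ω : Set (Pt n)) (T q : ℝ) (u : ℝ → Pt n → Pt n) :
    0 ≤ nrmQV Ω T q u :=
  Real.rpow_nonneg (integral_nonneg fun _ =>
    integral_nonneg fun _ => Real.rpow_nonneg (norm_nonneg _) _) _

lemma nrmS_nonneg {n : ℕ} (S : Set (Pt n)) (T q : ℝ) (u : ℝ → Pt n → ℝ) :
    0 ≤ nrmS S T q u :=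
  Real.rpow_nonneg (integral_nonneg fun _ =>
    integral_nonneg fun _ => Real.rpow_nonneg (abs_nonneg _) _) _

lemma holder_nrmV {α : Type*} [MeasurableSpace α] {μ : Measure α} [IsFiniteMeasure μ] {n : ℕ}
    {f : α → Pt n} {q : ℝ} (hq : 2 ≤ q) (hf : MemLp f (ENNReal.ofReal q) μ) :
    nrmV μ 2 f ≤ (μ Set.univ).toReal ^ ((1:ℝ)/2 - 1/q) * nrmV μ q f :=
  PBK.holder_2q hq hf

lemma mix_nrm {α : Type*} [MeasurableSpace α] {μ : Measure α} {n I : ℕ} {q : ℝ} (hq : 1 ≤ q)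
    {a : ℝ} {b : Fin I → ℝ} (ha : 0 ≤ a) (hb : ∀ j, 0 ≤ b j)
    {u : α → Pt n} {v : Fin I → α → Pt n} (hu : MemLp u (ENNReal.ofReal q) μ)
    (hv : ∀ j, MemLp (v j) (ENNReal.ofReal q) μ) :
    nrm μ q (fun x => a * ‖u x‖ + ∑ j, b j * ‖v j x‖) ≤
      a * nrmV μ q u + ∑ j, b j * nrmV μ q (v j) :=
  PBK.mix_bound hq ha hb hu hv

lemma ofReal_nrmV {α : Type*} [MeasurableSpace α] {μ : Measure α} {n : ℕ} {f : α → Pt n} {q : ℝ}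
    (hq : 0 < q) (hf : MemLp f (ENNReal.ofReal q) μ) :
    ENNReal.ofReal (nrmV μ q f) = (∫⁻ x, (‖f x‖₊ : ℝ≥0∞) ^ q ∂μ) ^ (1/q) := by
  rw [show nrmV μ q f = (∫ x, ‖f x‖ ^ q ∂μ) ^ (1/q) from rfl,
    PBK.ofReal_rpow_integral hq hf, PBK.eLpNorm_lintegral_eq hq]

lemma nrmQV_repr {n : ℕ} {Ω : Set (Pt n)} {T q : ℝ} (hq : 0 < q) {v : ℝ → Pt n → Pt n}
    [SFinite (vol Ω)]
    (hf : MemLp (fun z : ℝ × Pt n => v z.1 z.2) (ENNReal.ofReal q)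
      ((timeM T).prod (vol Ω))) :
    ENNReal.ofReal (nrmQV Ω T q v) =
      (∫⁻ t, ∫⁻ x, (‖v t x‖₊ : ℝ≥0∞) ^ q ∂vol Ω ∂timeM T) ^ (1/q) :=
  (PBK.double_repr hq hf).symm

end PBK2

end

/-- **Estimate (5.1)**: the combined bound for the auxiliary potential on the set `𝒦`. -/
theorem potential_bound_on_K
    {n : ℕ} (hn : 2 ≤ n) (C : Cell n) (T : ℝ) (hT : 0 < T)
    (I : ℕ) (F Rg : ℝ) (hF : 0 < F) (hRg : 0 < Rg)
    (z : Fin I → ℝ) (hz : ∀ i, z i ≠ 0)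
    (ℓ : ℝ) (hℓ : 2 ≤ ℓ)
    (ϰ δ p : ℝ) (hϰ : 1 < ϰ) (hδ : 0 < δ)
    (hp2 : 2 ≤ p) (hpδ : p ≤ 2 + δ) (hpϰ : p < 2 + 1 / (ϰ - 1))
    (ρcp : ℝ) (hρcp : 0 < ρcp)
    -- (H1): transport coefficients, Carathéodory and structural bounds
    (σ α : Pt n → ℝ → ℝ) (D : Fin I → Pt n → ℝ → ℝ)
    (PiT : Pt n → ℝ → (Pt n →L[ℝ] Pt n)) (D' : Fin I → Pt n → ℝ → ℝ → ℝ)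
    (S : Fin I → Pt n → ℝ → ℝ → ℝ)
    (σm σs Pis αs : ℝ) (Dm Ds Ss ts gs D's : Fin I → ℝ)
    (hσm : 0 < σm) (hPis : 0 < Pis) (hαs : 0 < αs) (hDm : ∀ i, 0 < Dm i)
    (hσcar : Cara σ) (hαcar : Cara α) (hDcar : ∀ i, Cara (D i))
    (hPicar : CaraM PiT) (hD'car : ∀ i, Cara2 (fun x q => D' i x q))
    (hScar : ∀ i, Cara2 (S i))
    (hσ : ∀ x e, σm ≤ σ x e ∧ σ x e ≤ σs)
    (hPib : ∀ x e a, ‖PiT x e a‖ ≤ Pis * ‖a‖)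
    (hα : ∀ x e, |α x e| ≤ αs)
    (hS : ∀ i x d e, |d * S i x d e| ≤ Ss i)
    (hD' : ∀ i x d e, Rg * e ^ 2 * |D' i x d e| ≤ D's i)
    (hDup : ∀ i x e, F * |z i| * D i x e ≤ Ds i)
    (hDlow : ∀ i x e, Dm i ≤ D i x e)
    -- (H2): the thermal conductivity tensor
    (K : Pt n → ℝ → (Pt n →L[ℝ] Pt n)) (km ks : ℝ) (hkm : 0 < km)
    (hKcar : CaraM K) (hKell : EllipticM K km) (hKbd : BoundedM K ks)
    -- (H3): the radiative coefficient
    (hRad : Pt n → ℝ → ℝ) (bm bs : ℝ) (hbm : 0 < bm)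
    (hRcar : Cara hRad)
    (hRbd : ∀ x ∈ C.Γw, ∀ e : ℝ, bm ≤ hRad x e ∧ hRad x e ≤ bs)
    -- (H4): the transference numbers
    (tr : Fin I → Pt n → ℝ) (htmeas : ∀ i, Measurable (tr i))
    (ht : ∀ i x, 0 ≤ tr i x ∧ tr i x ≤ F * |z i| * ts i)
    -- (H5): the boundary current
    (g : Pt n → ℝ)
    (hg : MemLp g (ENNReal.ofReal (2 + δ)) (sm (frontier C.Ω)))
    (hgmean : (∫ x, g x ∂sm (frontier C.Ω)) = 0)
    -- (H6): boundary temperature, radiation source and heat transfer coefficient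
    (θe : ℝ → Pt n → ℝ)
    (hθe : MemLp (fun q : ℝ × Pt n => θe q.1 q.2) (ENNReal.ofReal (2 + δ))
      ((timeM T).prod (sm C.Γ)))
    (γ : Pt n → ℝ → ℝ → ℝ) (hCc : Pt n → ℝ → ℝ → ℝ) (hCs : ℝ)
    (hγcar : Cara2 γ) (hCcar : Cara2 hCc)
    (γw : ℝ → Pt n → ℝ)
    (hγw : MemLp (fun q : ℝ × Pt n => γw q.1 q.2) (ENNReal.ofReal (2 + δ))
      ((timeM T).prod (sm C.Γw)))
    (hγbd : ∀ x ∈ C.Γw, ∀ t e : ℝ, |γ x t e| ≤ γw t x)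
    (hCbd : ∀ x ∈ C.Γ, ∀ t e : ℝ, 0 ≤ hCc x t e ∧ hCc x t e ≤ hCs)
    -- (H7): the electrochemical boundary fluxes
    (gbv : Fin I → Pt n → ℝ → ℝ → ℝ → ℝ) (hgcar : ∀ i, Cara3 (gbv i))
    (γi : Fin I → ℝ → Pt n → ℝ)
    (hγi : ∀ i, MemLp (fun q : ℝ × Pt n => γi i q.1 q.2) (ENNReal.ofReal (2 + δ))
      ((timeM T).prod (sm C.Γ)))
    (hgs : ∀ i, 0 ≤ gs i)
    (hgrow : ∀ i x t e d, |gbv i x t e d| ≤ γi i t x + gs i * (|d| + |e|))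
    -- (H8): the initial data
    (θ0 : Pt n → ℝ) (hθ0 : MemLp θ0 (ENNReal.ofReal (2 + δ)) (vol C.Ω))
    (c0 : Fin I → Pt n → ℝ)
    (hc0 : ∀ i, MemLp (c0 i) (ENNReal.ofReal (2 + δ)) (vol C.Ω))
    -- the radii of the convex set 𝒦 and the frozen pair (c,θ) ∈ 𝒦
    (R : ℝ) (Ri : Fin I → ℝ) (hR : 0 < R) (hRi : ∀ i, 0 < Ri i)
    (w : (Fin I → PFn n) × PFn n) (hw : inK I C.Ω C.Γw T p ℓ R Ri w)
    -- the auxiliary potential of Proposition 4.1 for the data (w.2(t), w.1(t))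
    (φ : PFn n)
    (hφ : ∀ᵐ t ∂timeM T, MemVp C.Ω p (φ.at t) ∧
      EllSol I C.Ω C.Γ (p / (p - 1)) F z σ α D (w.2.at t)
        (fun i => (w.1 i).at t) g (φ.at t))
    -- the constants of the elliptic estimates of Proposition 4.1
    (K0 M1 M2 M3 : ℝ) (hK0 : 0 < K0) (hM1 : 0 < M1) (hM2 : 0 < M2) (hM3 : 0 < M3)
    (hEn : ∀ᵐ t ∂timeM T,
      σm * nrmV (vol C.Ω) 2 (φ.gr t) ≤
        K0 * nrm (sm C.Γ) 2 g + σs * αs * nrmV (vol C.Ω) 2 (w.2.gr t)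
          + ∑ j, Ds j * nrmV (vol C.Ω) 2 ((w.1 j).gr t))
    (hHi : ∀ᵐ t ∂timeM T,
      nrmV (vol C.Ω) p (φ.gr t) ≤
        M1 * nrmV (vol C.Ω) 2 (φ.gr t)
          + M2 * σm⁻¹ * Real.sqrt (1 + σm) *
              nrm (vol C.Ω) p
                (fun x => σs * αs * ‖w.2.gr t x‖ + ∑ j, Ds j * ‖(w.1 j).gr t x‖)
          + M3 * σm⁻¹ * Real.sqrt (2 + 2 ^ (-(1 : ℝ) / (n : ℝ)) * σm) *
              nrm (sm C.Γ) p g) :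
    nrmQV C.Ω T p φ.gr ≤
      BsharpD n σm T p M1 K0 M3 (nrm (sm C.Γ) 2 g) (nrm (sm C.Γ) p g)
        + AsharpD σm M1 M2 (mVol C.Ω) p * (σs * αs * R + ∑ j, Ds j * Ri j) := by
  classical
  have hp0 : (0:ℝ) < p := by linarith
  have hp1 : (1:ℝ) ≤ p := by linarith
  haveI : IsFiniteMeasure (vol C.Ω) := by
    constructor
    show (volume.restrict C.Ω) Set.univ < ⊤
    rw [Measure.restrict_apply_univ]
    exact C.c1.2.1.measure_lt_top
  haveI : SFinite (vol C.Ω) := inferInstance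
  haveI : SFinite (timeM T) := by unfold timeM; infer_instance
  -- constants
  set g2 := nrm (sm C.Γ) 2 g with hg2def
  set gp := nrm (sm C.Γ) p g with hgpdef
  have hg2n : 0 ≤ g2 := by rw [hg2def]; exact PBK2.nrm_nonneg _ _ _
  have hgpn : 0 ≤ gp := by rw [hgpdef]; exact PBK2.nrm_nonneg _ _ _
  have hσm' : (0:ℝ) < σm⁻¹ := inv_pos.mpr hσm
  have hσs0 : (0:ℝ) < σs := lt_of_lt_of_le hσm (le_trans (hσ 0 0).1 (hσ 0 0).2)
  have ha0 : (0:ℝ) ≤ σs * αs := (mul_pos hσs0 hαs).le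
  have hDs : ∀ j, 0 < Ds j := fun j =>
    lt_of_lt_of_le (mul_pos (mul_pos hF (abs_pos.mpr (hz j)))
      (lt_of_lt_of_le (hDm j) (hDlow j 0 0))) (hDup j 0 0)
  set sq3 := Real.sqrt (2 + 2 ^ (-(1:ℝ) / (n:ℝ)) * σm) with hsq3
  have hsq3n : 0 ≤ sq3 := by rw [hsq3]; exact Real.sqrt_nonneg _
  set A := AsharpD σm M1 M2 (mVol C.Ω) p with hA
  set B0 := σm⁻¹ * (M1 * K0 * g2 + M3 * sq3 * gp) with hB0
  have hmVn : (0:ℝ) ≤ mVol C.Ω := by unfold mVol; exact ENNReal.toReal_nonneg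
  have hA0 : 0 ≤ A := by
    rw [hA]; unfold AsharpD
    exact mul_nonneg hσm'.le (add_nonneg (mul_nonneg hM1.le (Real.rpow_nonneg hmVn _))
      (mul_nonneg hM2.le (Real.sqrt_nonneg _)))
  have hB00 : 0 ≤ B0 := by
    rw [hB0]
    exact mul_nonneg hσm'.le (add_nonneg (mul_nonneg (mul_nonneg hM1.le hK0.le) hg2n)
      (mul_nonneg (mul_nonneg hM3.le hsq3n) hgpn))
  -- product MemLp of the frozen data and slice properties
  have hθprod : MemLp (fun z : ℝ × Pt n => w.2.gr z.1 z.2) (ENNReal.ofReal p)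
      ((timeM T).prod (vol C.Ω)) := hw.2.1.1.2.1
  have hcprod : ∀ j, MemLp (fun z : ℝ × Pt n => (w.1 j).gr z.1 z.2) (ENNReal.ofReal p)
      ((timeM T).prod (vol C.Ω)) := fun j => (hw.1 j).1.2.1
  obtain ⟨hθae, hθmeas0, hθfin0⟩ := PBK.slice_props hp0 hθprod
  have hcsl := fun j => PBK.slice_props hp0 (hcprod j)
  -- the spatial lintegral functionals
  set Λφf : ℝ → ℝ≥0∞ := fun t => ∫⁻ x, (‖φ.gr t x‖₊ : ℝ≥0∞) ^ p ∂vol C.Ω with hΛφf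
  set Λθf : ℝ → ℝ≥0∞ := fun t => ∫⁻ x, (‖w.2.gr t x‖₊ : ℝ≥0∞) ^ p ∂vol C.Ω with hΛθf
  set Λcf : Fin I → ℝ → ℝ≥0∞ :=
    fun j t => ∫⁻ x, (‖(w.1 j).gr t x‖₊ : ℝ≥0∞) ^ p ∂vol C.Ω with hΛcf
  have hθmeas : AEMeasurable Λθf (timeM T) := hθmeas0
  have hcmeas : ∀ j, AEMeasurable (Λcf j) (timeM T) := fun j => (hcsl j).2.1
  have hθae' : ∀ᵐ t ∂timeM T, MemLp (w.2.gr t) (ENNReal.ofReal p) (vol C.Ω) := hθae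
  have hcae : ∀ᵐ t ∂timeM T, ∀ j, MemLp ((w.1 j).gr t) (ENNReal.ofReal p) (vol C.Ω) :=
    ae_all_iff.mpr fun j => (hcsl j).1
  set c1 : ℝ≥0∞ := ENNReal.ofReal (A * (σs * αs)) with hc1
  set c2 : Fin I → ℝ≥0∞ := fun j => ENNReal.ofReal (A * Ds j) with hc2
  -- the pointwise-in-time estimate
  have keyt : ∀ᵐ t ∂timeM T, (Λφf t) ^ (1/p) ≤
      ENNReal.ofReal B0 + c1 * (Λθf t) ^ (1/p) + ∑ j, c2 j * (Λcf j t) ^ (1/p) := by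
    filter_upwards [hφ, hEn, hHi, hθae', hcae] with t ht hEnt hHit hθm hcm
    have hφm : MemLp (φ.gr t) (ENNReal.ofReal p) (vol C.Ω) := ht.1.1.2.1
    -- Hölder per field
    have hμuniv : ((vol C.Ω) Set.univ).toReal = mVol C.Ω := by
      show ((volume.restrict C.Ω) Set.univ).toReal = _
      rw [Measure.restrict_apply_univ]; rfl
    have hYθ : nrmV (vol C.Ω) 2 (w.2.gr t) ≤
        mVol C.Ω ^ ((1:ℝ)/2 - 1/p) * nrmV (vol C.Ω) p (w.2.gr t) := by
      have h := PBK2.holder_nrmV hp2 hθm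
      rwa [hμuniv] at h
    have hYc : ∀ j, nrmV (vol C.Ω) 2 ((w.1 j).gr t) ≤
        mVol C.Ω ^ ((1:ℝ)/2 - 1/p) * nrmV (vol C.Ω) p ((w.1 j).gr t) := by
      intro j
      have h := PBK2.holder_nrmV hp2 (hcm j)
      rwa [hμuniv] at h
    -- L²-energy estimate divided by σm
    have hYφ : nrmV (vol C.Ω) 2 (φ.gr t) ≤
        σm⁻¹ * (K0 * g2 + σs * αs * nrmV (vol C.Ω) 2 (w.2.gr t)
          + ∑ j, Ds j * nrmV (vol C.Ω) 2 ((w.1 j).gr t)) := by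
      have h := mul_le_mul_of_nonneg_left hEnt hσm'.le
      rwa [inv_mul_cancel_left₀ hσm.ne'] at h
    -- Minkowski for the mixed term
    have hmix : nrm (vol C.Ω) p
        (fun x => σs * αs * ‖w.2.gr t x‖ + ∑ j, Ds j * ‖(w.1 j).gr t x‖) ≤
        σs * αs * nrmV (vol C.Ω) p (w.2.gr t)
          + ∑ j, Ds j * nrmV (vol C.Ω) p ((w.1 j).gr t) :=
      PBK2.mix_nrm hp1 ha0 (fun j => (hDs j).le) hθm hcm
    set Xθ := nrmV (vol C.Ω) p (w.2.gr t) with hXθ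
    set Xc : Fin I → ℝ := fun j => nrmV (vol C.Ω) p ((w.1 j).gr t) with hXc
    set S := σs * αs * Xθ + ∑ j, Ds j * Xc j with hS
    have hXθn : 0 ≤ Xθ := by rw [hXθ]; exact PBK2.nrmV_nonneg _ _ _
    have hXcn : ∀ j, 0 ≤ Xc j := fun j => by rw [hXc]; exact PBK2.nrmV_nonneg _ _ _
    have hS0 : 0 ≤ S := by
      rw [hS]
      exact add_nonneg (mul_nonneg ha0 hXθn)
        (Finset.sum_nonneg fun j _ => mul_nonneg (hDs j).le (hXcn j))
    have hYsum : σs * αs * nrmV (vol C.Ω) 2 (w.2.gr t)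
        + ∑ j, Ds j * nrmV (vol C.Ω) 2 ((w.1 j).gr t) ≤
        mVol C.Ω ^ ((1:ℝ)/2 - 1/p) * S := by
      have h1 : σs * αs * nrmV (vol C.Ω) 2 (w.2.gr t) ≤
          σs * αs * (mVol C.Ω ^ ((1:ℝ)/2 - 1/p) * Xθ) :=
        mul_le_mul_of_nonneg_left hYθ ha0
      have h3 : ∑ j, Ds j * nrmV (vol C.Ω) 2 ((w.1 j).gr t) ≤
          ∑ j, Ds j * (mVol C.Ω ^ ((1:ℝ)/2 - 1/p) * Xc j) :=
        Finset.sum_le_sum fun j _ => mul_le_mul_of_nonneg_left (hYc j) (hDs j).le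
      have h4 : ∑ j, Ds j * (mVol C.Ω ^ ((1:ℝ)/2 - 1/p) * Xc j)
          = mVol C.Ω ^ ((1:ℝ)/2 - 1/p) * ∑ j, Ds j * Xc j := by
        rw [Finset.mul_sum]; exact Finset.sum_congr rfl fun j _ => by ring
      calc σs * αs * nrmV (vol C.Ω) 2 (w.2.gr t)
            + ∑ j, Ds j * nrmV (vol C.Ω) 2 ((w.1 j).gr t)
          ≤ σs * αs * (mVol C.Ω ^ ((1:ℝ)/2 - 1/p) * Xθ)
            + ∑ j, Ds j * (mVol C.Ω ^ ((1:ℝ)/2 - 1/p) * Xc j) := add_le_add h1 h3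
        _ = mVol C.Ω ^ ((1:ℝ)/2 - 1/p) * S := by rw [h4, hS]; ring
    -- combine into the real estimate
    have hkey_real : nrmV (vol C.Ω) p (φ.gr t) ≤ B0 + A * S := by
      have c2n : (0:ℝ) ≤ M2 * σm⁻¹ * Real.sqrt (1 + σm) :=
        mul_nonneg (mul_nonneg hM2.le hσm'.le) (Real.sqrt_nonneg _)
      have step1 : nrmV (vol C.Ω) p (φ.gr t) ≤
          M1 * (σm⁻¹ * (K0 * g2 + σs * αs * nrmV (vol C.Ω) 2 (w.2.gr t)
            + ∑ j, Ds j * nrmV (vol C.Ω) 2 ((w.1 j).gr t)))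
          + M2 * σm⁻¹ * Real.sqrt (1 + σm) * S + M3 * σm⁻¹ * sq3 * gp := by
        refine le_trans hHit ?_
        exact add_le_add (add_le_add (mul_le_mul_of_nonneg_left hYφ hM1.le)
          (mul_le_mul_of_nonneg_left (le_trans hmix (by rw [hS])) c2n)) le_rfl
      have step2 : nrmV (vol C.Ω) p (φ.gr t) ≤
          M1 * (σm⁻¹ * (K0 * g2 + mVol C.Ω ^ ((1:ℝ)/2 - 1/p) * S))
          + M2 * σm⁻¹ * Real.sqrt (1 + σm) * S + M3 * σm⁻¹ * sq3 * gp := by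
        refine le_trans step1 ?_
        have hin : K0 * g2 + σs * αs * nrmV (vol C.Ω) 2 (w.2.gr t)
            + ∑ j, Ds j * nrmV (vol C.Ω) 2 ((w.1 j).gr t) ≤
            K0 * g2 + mVol C.Ω ^ ((1:ℝ)/2 - 1/p) * S := by linarith [hYsum]
        exact add_le_add (add_le_add (mul_le_mul_of_nonneg_left
          (mul_le_mul_of_nonneg_left hin hσm'.le) hM1.le) le_rfl) le_rfl
      refine le_trans step2 (le_of_eq ?_)
      rw [hB0, hA]; unfold AsharpD; ring
    -- pass to ℝ≥0∞
    have hkey2 : nrmV (vol C.Ω) p (φ.gr t) ≤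
        B0 + (A * (σs * αs)) * Xθ + ∑ j, (A * Ds j) * Xc j := by
      have h4 : ∑ j, (A * Ds j) * Xc j = A * ∑ j, Ds j * Xc j := by
        rw [Finset.mul_sum]; exact Finset.sum_congr rfl fun j _ => by ring
      rw [h4]
      refine le_trans hkey_real (le_of_eq ?_)
      rw [hS]; ring
    have eφ : ENNReal.ofReal (nrmV (vol C.Ω) p (φ.gr t)) = (Λφf t) ^ (1/p) :=
      PBK2.ofReal_nrmV hp0 hφm
    have eθ : ENNReal.ofReal Xθ = (Λθf t) ^ (1/p) := PBK2.ofReal_nrmV hp0 hθm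
    have ec : ∀ j, ENNReal.ofReal (Xc j) = (Λcf j t) ^ (1/p) :=
      fun j => PBK2.ofReal_nrmV hp0 (hcm j)
    calc (Λφf t) ^ (1/p) = ENNReal.ofReal (nrmV (vol C.Ω) p (φ.gr t)) := eφ.symm
      _ ≤ ENNReal.ofReal (B0 + (A * (σs * αs)) * Xθ + ∑ j, (A * Ds j) * Xc j) :=
          ENNReal.ofReal_le_ofReal hkey2
      _ = ENNReal.ofReal B0 + ENNReal.ofReal ((A * (σs * αs)) * Xθ)
          + ∑ j, ENNReal.ofReal ((A * Ds j) * Xc j) := by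
          rw [ENNReal.ofReal_add (add_nonneg hB00 (mul_nonneg (mul_nonneg hA0 ha0) hXθn))
              (Finset.sum_nonneg fun j _ =>
                mul_nonneg (mul_nonneg hA0 (hDs j).le) (hXcn j)),
            ENNReal.ofReal_add hB00 (mul_nonneg (mul_nonneg hA0 ha0) hXθn),
            ENNReal.ofReal_sum_of_nonneg
              (fun j _ => mul_nonneg (mul_nonneg hA0 (hDs j).le) (hXcn j))]
      _ = ENNReal.ofReal B0 + c1 * (Λθf t) ^ (1/p) + ∑ j, c2 j * (Λcf j t) ^ (1/p) := by
          rw [ENNReal.ofReal_mul (mul_nonneg hA0 ha0), eθ, hc1]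
          congr 1
          exact Finset.sum_congr rfl fun j _ => by
            rw [ENNReal.ofReal_mul (mul_nonneg hA0 (hDs j).le), ec j, hc2]
  -- integrate in time
  have hmono : ∫⁻ t, Λφf t ∂timeM T ≤
      ∫⁻ t, (ENNReal.ofReal B0 + c1 * (Λθf t) ^ (1/p)
        + ∑ j, c2 j * (Λcf j t) ^ (1/p)) ^ p ∂timeM T := by
    refine lintegral_mono_ae ?_
    filter_upwards [keyt] with t ht
    calc Λφf t = ((Λφf t) ^ (1/p)) ^ p := by
          rw [← ENNReal.rpow_mul, one_div_mul_cancel hp0.ne', ENNReal.rpow_one]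
      _ ≤ _ := ENNReal.rpow_le_rpow ht hp0.le
  have m1 : AEMeasurable (fun t => c1 * (Λθf t) ^ (1/p)) (timeM T) :=
    (hθmeas.pow aemeasurable_const).const_mul c1
  have m2 : ∀ j, AEMeasurable (fun t => c2 j * (Λcf j t) ^ (1/p)) (timeM T) :=
    fun j => ((hcmeas j).pow aemeasurable_const).const_mul (c2 j)
  have msum : AEMeasurable (fun t => ∑ j, c2 j * (Λcf j t) ^ (1/p)) (timeM T) :=
    Finset.aemeasurable_fun_sum _ fun j _ => m2 j
  have hmink : (∫⁻ t, (ENNReal.ofReal B0 + c1 * (Λθf t) ^ (1/p)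
        + ∑ j, c2 j * (Λcf j t) ^ (1/p)) ^ p ∂timeM T) ^ (1/p) ≤
      (∫⁻ _t, (ENNReal.ofReal B0) ^ p ∂timeM T) ^ (1/p)
        + (∫⁻ t, (c1 * (Λθf t) ^ (1/p)) ^ p ∂timeM T) ^ (1/p)
        + ∑ j, (∫⁻ t, (c2 j * (Λcf j t) ^ (1/p)) ^ p ∂timeM T) ^ (1/p) := by
    calc (∫⁻ t, (ENNReal.ofReal B0 + c1 * (Λθf t) ^ (1/p)
          + ∑ j, c2 j * (Λcf j t) ^ (1/p)) ^ p ∂timeM T) ^ (1/p)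
        ≤ (∫⁻ t, (ENNReal.ofReal B0 + c1 * (Λθf t) ^ (1/p)) ^ p ∂timeM T) ^ (1/p)
          + (∫⁻ t, (∑ j, c2 j * (Λcf j t) ^ (1/p)) ^ p ∂timeM T) ^ (1/p) :=
          ENNReal.lintegral_Lp_add_le (aemeasurable_const.add m1) msum hp1
      _ ≤ ((∫⁻ _t, (ENNReal.ofReal B0) ^ p ∂timeM T) ^ (1/p)
            + (∫⁻ t, (c1 * (Λθf t) ^ (1/p)) ^ p ∂timeM T) ^ (1/p))
          + ∑ j, (∫⁻ t, (c2 j * (Λcf j t) ^ (1/p)) ^ p ∂timeM T) ^ (1/p) := by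
          refine add_le_add ?_ ?_
          · exact ENNReal.lintegral_Lp_add_le aemeasurable_const m1 hp1
          · exact PBK.lintegral_Lp_sum_le Finset.univ _ (fun j _ => m2 j) hp1
  -- evaluate the three pieces
  have hTuniv : (timeM T) Set.univ = ENNReal.ofReal T := by
    show (volume.restrict (Set.Ioc 0 T)) Set.univ = _
    rw [Measure.restrict_apply_univ, Real.volume_Ioc, sub_zero]
  have ev1 : (∫⁻ _t, (ENNReal.ofReal B0) ^ p ∂timeM T) ^ (1/p)
      = ENNReal.ofReal B0 * (ENNReal.ofReal T) ^ (1/p) := by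
    rw [lintegral_const, hTuniv, ENNReal.mul_rpow_of_nonneg _ _ (by positivity : (0:ℝ) ≤ 1/p),
      ← ENNReal.rpow_mul, mul_one_div_cancel hp0.ne', ENNReal.rpow_one]
  have ev2gen : ∀ (c : ℝ≥0∞) (Λ : ℝ → ℝ≥0∞), c ≠ ⊤ →
      (∫⁻ t, (c * (Λ t) ^ (1/p)) ^ p ∂timeM T) ^ (1/p)
        = c * (∫⁻ t, Λ t ∂timeM T) ^ (1/p) := by
    intro c Λ hc
    have hpt : ∀ t, (c * (Λ t) ^ (1/p)) ^ p = c ^ p * Λ t := fun t => by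
      rw [ENNReal.mul_rpow_of_nonneg _ _ hp0.le, ← ENNReal.rpow_mul,
        one_div_mul_cancel hp0.ne', ENNReal.rpow_one]
    rw [lintegral_congr hpt,
      lintegral_const_mul' _ _ (ENNReal.rpow_ne_top_of_nonneg hp0.le hc),
      ENNReal.mul_rpow_of_nonneg _ _ (by positivity : (0:ℝ) ≤ 1/p),
      ← ENNReal.rpow_mul, mul_one_div_cancel hp0.ne', ENNReal.rpow_one]
  have evθ : (∫⁻ t, Λθf t ∂timeM T) ^ (1/p)
      = ENNReal.ofReal (nrmQV C.Ω T p w.2.gr) := (PBK2.nrmQV_repr hp0 hθprod).symm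
  have evc : ∀ j, (∫⁻ t, Λcf j t ∂timeM T) ^ (1/p)
      = ENNReal.ofReal (nrmQV C.Ω T p (w.1 j).gr) :=
    fun j => (PBK2.nrmQV_repr hp0 (hcprod j)).symm
  -- bounds from membership in the convex set
  have hθR : nrmQV C.Ω T p w.2.gr ≤ R := by
    have h := hw.2.2
    have h0 := PBK2.nrmS_nonneg C.Γw T ℓ w.2.tr
    linarith
  have hcR : ∀ j, nrmQV C.Ω T p (w.1 j).gr ≤ Ri j := by
    intro j
    have h := (hw.1 j).2
    have h0 := PBK2.nrmQ_nonneg C.Ω T p (w.1 j).u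
    linarith
  -- the combined bound in ℝ≥0∞
  set RHSval := BsharpD n σm T p M1 K0 M3 g2 gp
    + A * (σs * αs * R + ∑ j, Ds j * Ri j) with hRHSval
  have hRHS0 : 0 ≤ RHSval := by
    rw [hRHSval]
    refine add_nonneg ?_ (mul_nonneg hA0 (add_nonneg (mul_nonneg ha0 hR.le)
      (Finset.sum_nonneg fun j _ => mul_nonneg (hDs j).le (hRi j).le)))
    unfold BsharpD
    exact mul_nonneg (mul_nonneg hσm'.le (Real.rpow_nonneg hT.le _))
      (add_nonneg (mul_nonneg (mul_nonneg hM1.le hK0.le) hg2n)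
        (mul_nonneg (mul_nonneg hM3.le (Real.sqrt_nonneg _)) hgpn))
  have KEY : (∫⁻ t, Λφf t ∂timeM T) ^ (1/p) ≤ ENNReal.ofReal RHSval := by
    calc (∫⁻ t, Λφf t ∂timeM T) ^ (1/p)
        ≤ (∫⁻ t, (ENNReal.ofReal B0 + c1 * (Λθf t) ^ (1/p)
            + ∑ j, c2 j * (Λcf j t) ^ (1/p)) ^ p ∂timeM T) ^ (1/p) :=
          ENNReal.rpow_le_rpow hmono (by positivity)
      _ ≤ (∫⁻ _t, (ENNReal.ofReal B0) ^ p ∂timeM T) ^ (1/p)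
            + (∫⁻ t, (c1 * (Λθf t) ^ (1/p)) ^ p ∂timeM T) ^ (1/p)
            + ∑ j, (∫⁻ t, (c2 j * (Λcf j t) ^ (1/p)) ^ p ∂timeM T) ^ (1/p) := hmink
      _ = ENNReal.ofReal B0 * (ENNReal.ofReal T) ^ (1/p)
            + c1 * ENNReal.ofReal (nrmQV C.Ω T p w.2.gr)
            + ∑ j, c2 j * ENNReal.ofReal (nrmQV C.Ω T p (w.1 j).gr) := by
          rw [ev1, ev2gen c1 Λθf ENNReal.ofReal_ne_top, evθ]
          congr 1
          exact Finset.sum_congr rfl fun j _ => by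
            rw [ev2gen (c2 j) (Λcf j) ENNReal.ofReal_ne_top, evc j]
      _ ≤ ENNReal.ofReal B0 * (ENNReal.ofReal T) ^ (1/p)
            + c1 * ENNReal.ofReal R + ∑ j, c2 j * ENNReal.ofReal (Ri j) := by
          refine add_le_add (add_le_add le_rfl
            (mul_le_mul_right (ENNReal.ofReal_le_ofReal hθR) _)) ?_
          exact Finset.sum_le_sum fun j _ =>
            mul_le_mul_right (ENNReal.ofReal_le_ofReal (hcR j)) _
      _ = ENNReal.ofReal RHSval := by
          rw [hc1, hc2, ENNReal.ofReal_rpow_of_nonneg hT.le (by positivity : (0:ℝ) ≤ 1/p),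
            ← ENNReal.ofReal_mul hB00, ← ENNReal.ofReal_mul (mul_nonneg hA0 ha0)]
          have hsc : ∀ j : Fin I, ENNReal.ofReal (A * Ds j) * ENNReal.ofReal (Ri j)
              = ENNReal.ofReal ((A * Ds j) * Ri j) := fun j =>
            (ENNReal.ofReal_mul (mul_nonneg hA0 (hDs j).le)).symm
          rw [Finset.sum_congr rfl fun j _ => hsc j,
            ← ENNReal.ofReal_sum_of_nonneg (fun j _ =>
              mul_nonneg (mul_nonneg hA0 (hDs j).le) (hRi j).le),
            ← ENNReal.ofReal_add (mul_nonneg hB00 (Real.rpow_nonneg hT.le _))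
              (mul_nonneg (mul_nonneg hA0 ha0) hR.le),
            ← ENNReal.ofReal_add (add_nonneg (mul_nonneg hB00 (Real.rpow_nonneg hT.le _))
              (mul_nonneg (mul_nonneg hA0 ha0) hR.le))
              (Finset.sum_nonneg fun j _ =>
                mul_nonneg (mul_nonneg hA0 (hDs j).le) (hRi j).le)]
          congr 1
          have h4 : ∑ j, (A * Ds j) * Ri j = A * ∑ j, Ds j * Ri j := by
            rw [Finset.mul_sum]; exact Finset.sum_congr rfl fun j _ => by ring
          rw [h4, hRHSval, hB0, hsq3, hA]
          unfold BsharpD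
          ring
  -- conclude
  have hrfl : nrmQV C.Ω T p φ.gr
      = (∫ t, (∫ x, ‖φ.gr t x‖ ^ p ∂vol C.Ω) ∂timeM T) ^ (1/p) := rfl
  rw [← hRHSval] at *
  by_cases hint : Integrable (fun t => ∫ x, ‖φ.gr t x‖ ^ p ∂vol C.Ω) (timeM T)
  · -- integrable case
    have haeq : (fun t => ∫ x, ‖φ.gr t x‖ ^ p ∂vol C.Ω)
        =ᵐ[timeM T] fun t => (Λφf t).toReal := by
      filter_upwards [hφ] with t ht
      exact (PBK.integral_rpow_eq_toReal hp0 ht.1.1.2.1).1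
    have hfinae : ∀ᵐ t ∂timeM T, Λφf t ≠ ⊤ := by
      filter_upwards [hφ] with t ht
      exact (PBK.integral_rpow_eq_toReal hp0 ht.1.1.2.1).2
    have h1 : (∫ t, (∫ x, ‖φ.gr t x‖ ^ p ∂vol C.Ω) ∂timeM T)
        = (∫⁻ t, Λφf t ∂timeM T).toReal := by
      rw [integral_congr_ae haeq]
      have hint2 : Integrable (fun t => (Λφf t).toReal) (timeM T) := hint.congr haeq
      rw [integral_eq_lintegral_of_nonneg_ae
        (Filter.Eventually.of_forall fun t => ENNReal.toReal_nonneg) hint2.1]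
      congr 1
      refine lintegral_congr_ae ?_
      filter_upwards [hfinae] with t ht
      rw [ENNReal.ofReal_toReal ht]
    rw [hrfl, h1, ENNReal.toReal_rpow]
    calc ((∫⁻ t, Λφf t ∂timeM T) ^ (1/p)).toReal
        ≤ (ENNReal.ofReal RHSval).toReal :=
          ENNReal.toReal_mono ENNReal.ofReal_ne_top KEY
      _ = RHSval := ENNReal.toReal_ofReal hRHS0
  · -- non-integrable case: the norm is zero
    rw [hrfl, integral_undef hint, Real.zero_rpow (one_div_ne_zero hp0.ne')]
    exact hRHS0
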